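/- Let K be a number field that is not a CM-field, and let σ: K → ℂ be an embedding with σ(K) ⊄ ℝ (a complex embedding). Let F = σ^{−1}(ℝ) = {t ∈ K : σ(t) ∈ ℝ}, and suppose F ≠ ℚ. Then there exist two embeddings σ_k, σ_l: K → ℂ such that: neither σ_k nor σ_l is equal to σ or to the complex conjugate embedding σ̄; σ_k ≠ σ_l and σ_k is not the complex conjugate of σ_l; and |σ_k(t)| = |σ_l(t)| for all t ∈ F. (Equivalently: there are two distinct infinite places of K, both different from the infinite place determined by σ, whose associated absolute values agree on F.) -/

import Mathlib

open scoped BigOperators NumberField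
open NumberField

noncomputable section

/-- `SL_d(ℤ)`. -/
abbrev SLZ (d : ℕ) := Matrix.SpecialLinearGroup (Fin d) ℤ

/-- A family of elements of a group is multiplicatively independent if no nontrivial integer
power combination of its members is the identity. -/
def MulIndepFam {H : Type*} [Group H] {k : ℕ} (f : Fin k → H) : Prop :=
  ∀ c : Fin k → ℤ, (List.ofFn fun i => f i ^ c i).prod = 1 → c = 0

/-- The (torsion-free) rank of a subgroup is at least `k`. -/
def RankGE {H : Type*} [Group H] (G : Subgroup H) (k : ℕ) : Prop :=
  ∃ f : Fin k → H, (∀ i, f i ∈ G) ∧ MulIndepFam f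

/-- The subgroup of units of `𝓞 K` lying in a subfield `F` of `K`; it is canonically
isomorphic to the unit group of the ring of integers of `F`. -/
def unitsInSubfield (K : Type*) [Field K] (F : Subfield K) : Subgroup (𝓞 K)ˣ where
  carrier := {u | algebraMap (𝓞 K) K ((u : (𝓞 K)ˣ) : 𝓞 K) ∈ F}
  one_mem' := by simpa using F.one_mem
  mul_mem' := by
    intro a b ha hb
    simpa using F.mul_mem ha hb
  inv_mem' := by
    intro a ha
    show algebraMap (𝓞 K) K ((a⁻¹ : (𝓞 K)ˣ) : 𝓞 K) ∈ F
    have h : algebraMap (𝓞 K) K ((a⁻¹ : (𝓞 K)ˣ) : 𝓞 K)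
        * algebraMap (𝓞 K) K ((a : (𝓞 K)ˣ) : 𝓞 K) = 1 := by
      rw [← map_mul, Units.inv_mul, map_one]
    rw [eq_inv_of_mul_eq_one_left h]
    exact F.inv_mem ha

/-- `K` is a CM-field: it has a proper subfield `F` with `rank U_F = rank U_K`
(since `U_F ≤ U_K`, this is expressed as: every `k` with `rank U_K ≥ k` also has
`rank U_F ≥ k`). -/
def IsCM (K : Type*) [Field K] : Prop :=
  ∃ F : Subfield K, F ≠ ⊤ ∧
    ∀ k : ℕ, RankGE (⊤ : Subgroup (𝓞 K)ˣ) k → RankGE (unitsInSubfield K F) k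

/-- The logarithmic Mahler measure (base 2) of a unit of `𝓞 K`:
`h^Mah(u) = ∑_{σ : K →+* ℂ} log₊ |σ(u)|`. -/
def unitHMah (K : Type*) [Field K] [NumberField K] (u : (𝓞 K)ˣ) : ℝ :=
  ∑ σ : K →+* ℂ, max 0 (Real.logb 2 (‖σ (algebraMap (𝓞 K) K (u : 𝓞 K))‖))

/-- The size of (virtually) fundamental units of a subgroup `U ≤ U_K`: the infimum of all
`F > 0` such that the units of `U` of logarithmic Mahler measure at most `F` generate a
finite-index subgroup of `U`. -/
def fundSize (K : Type*) [Field K] [NumberField K] (U : Subgroup (𝓞 K)ˣ) : ℝ :=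
  sInf {F : ℝ | 0 < F ∧
    (Subgroup.closure {t : (𝓞 K)ˣ | t ∈ U ∧ unitHMah K t ≤ F}).relIndex U ≠ 0}

/-!
Let `F = σ⁻¹(ℝ)` and `τ₀ = σ|_F`: it is a real embedding of `F` with the two distinct extensions
`σ` and `σ̄`. If some embedding `τ ≠ τ₀` of `F` has two extensions to `K` that are neither equal
nor complex conjugate, they form the required pair, since they agree on `F`. Otherwise, as
`F ≠ ℚ` there is some `τ ≠ τ₀`, and its extensions being pairwise conjugate forces
`[K : F] = 2`. Then every embedding of `F` has exactly two extensions, which are conjugate, so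
`F` is totally real and no embedding of `K` is real. Hence `K / F` is a CM extension, so `U_F`
has the rank of `U_K` and `K` would be a CM-field.
-/

open Module ComplexEmbedding

theorem mulIndepFam_iff_linearIndependent {H : Type*} [CommGroup H] {k : ℕ} (f : Fin k → H) :
    MulIndepFam f ↔ LinearIndependent ℤ (Additive.ofMul ∘ f) := by
  simp only [Fintype.linearIndependent_iff, MulIndepFam, funext_iff, List.prod_ofFn,
    Function.comp_apply, ← ofMul_zpow, ← ofMul_prod, ofMul_eq_zero, Pi.zero_apply]

section Units

variable {K : Type*} [Field K] [NumberField K]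

theorem MulIndepFam.card_le_units_rank {k : ℕ} {f : Fin k → (𝓞 K)ˣ} (hf : MulIndepFam f) :
    k ≤ Units.rank K := by
  simpa [Units.finrank_eq] using
    ((mulIndepFam_iff_linearIndependent f).1 hf).fintype_card_le_finrank

theorem rankGE_unitsInSubfield_of_le_units_rank (F : Subfield K) {k : ℕ}
    (hk : k ≤ Units.rank F) : RankGE (unitsInSubfield K F) k := by
  obtain ⟨f, hf⟩ := exists_linearIndependent_of_le_finrank (R := ℤ)
    (hk.trans_eq (Units.finrank_eq F).symm)
  let ι : (𝓞 F)ˣ →* (𝓞 K)ˣ := Units.map (RingOfIntegers.mapRingHom F.subtype).toMonoidHom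
  have hι : Function.Injective ι := Units.map_injective fun x y h ↦
    RingOfIntegers.ext (Subtype.val_injective congr(($h : K)))
  refine ⟨fun i ↦ ι (f i).toMul, fun i ↦ SetLike.coe_mem (((f i).toMul : 𝓞 F) : F), ?_⟩
  rw [mulIndepFam_iff_linearIndependent]
  exact hf.map' (MonoidHom.toAdditive ι).toIntLinearMap (LinearMap.ker_eq_bot.2 hι)

theorem isCM_of_units_rank_eq (F : Subfield K) (hF : F ≠ ⊤) (h : Units.rank F = Units.rank K) :
    IsCM K :=
  ⟨F, hF, fun _ ⟨_, _, hf⟩ ↦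
    rankGE_unitsInSubfield_of_le_units_rank F (h ▸ hf.card_le_units_rank)⟩

theorem NumberField.IsCMField.isCM [IsCMField K] : IsCM K := by
  refine isCM_of_units_rank_eq _ (fun h ↦ ?_) (IsCMField.units_rank_eq_units_rank K)
  have := (maximalRealSubfield_eq_top_iff_isTotallyReal (K := K)).1 h
  exact IsTotallyComplex.complexEmbedding_not_isReal (lift K (algebraMap ℚ ℂ))
    (IsTotallyReal.complexEmbedding_isReal _)

end Units

theorem Subfield.one_lt_finrank_rat_of_ne_bot {K : Type*} [Field K] [CharZero K] {F : Subfield K}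
    [FiniteDimensional ℚ F] (hF : F ≠ ⊥) : 1 < finrank ℚ F := by
  refine lt_of_le_of_ne finrank_pos fun h ↦ hF ?_
  let E : IntermediateField ℚ K := F.toIntermediateField fun x ↦ by
    rw [eq_ratCast]; exact SubfieldClass.ratCast_mem F x
  have hE : E = ⊥ := IntermediateField.finrank_eq_one_iff.1 h.symm
  rw [Subfield.bot_eq_of_charZero, ← IntermediateField.bot_toSubfield, ← hE]
  rfl

namespace NumberField.ComplexEmbedding

section Extensions

variable {F K : Type*} [Field F] [Field K] [Algebra F K]

theorem isReal_of_conjugate_comp_eq {φ : K →+* ℂ} {τ : F →+* ℂ}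
    (hφ : φ.comp (algebraMap F K) = τ) (hφ' : (conjugate φ).comp (algebraMap F K) = τ) :
    IsReal τ := by
  rw [isReal_iff, ← hφ, ← conjugate_comp, hφ', hφ]

theorem conjugate_comp_eq_of_isReal {σ : K →+* ℂ} (hσ : IsReal (σ.comp (algebraMap F K))) :
    (conjugate σ).comp (algebraMap F K) = σ.comp (algebraMap F K) := by
  rw [conjugate_comp, isReal_iff.1 hσ]

theorem pair_conjugate_subset_setOf_comp_algebraMap_eq {σ : K →+* ℂ}
    (hσ : IsReal (σ.comp (algebraMap F K))) :
    {σ, conjugate σ} ⊆ {φ : K →+* ℂ | φ.comp (algebraMap F K) = σ.comp (algebraMap F K)} := by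
  rintro φ (rfl | rfl)
  · rfl
  · exact conjugate_comp_eq_of_isReal hσ

theorem ncard_pair_conjugate {σ : K →+* ℂ} (hσ : ¬IsReal σ) :
    ({σ, conjugate σ} : Set (K →+* ℂ)).ncard = 2 :=
  Set.ncard_pair fun h ↦ hσ (isReal_iff.2 h.symm)

variable (K) in
def ExtensionsConjugate (τ : F →+* ℂ) : Prop :=
  ∀ ρ₁ ρ₂ : K →+* ℂ, ρ₁.comp (algebraMap F K) = τ → ρ₂.comp (algebraMap F K) = τ →
    ρ₁ ≠ ρ₂ → ρ₁ = conjugate ρ₂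

variable [CharZero F] [FiniteDimensional F K]

theorem ncard_setOf_comp_algebraMap_eq (τ : F →+* ℂ) :
    {φ : K →+* ℂ | φ.comp (algebraMap F K) = τ}.ncard = finrank F K := by
  let := τ.toAlgebra
  rw [← AlgHom.card F K ℂ, ← Nat.card_eq_fintype_card]
  exact Nat.card_congr
    { toFun φ := ⟨φ.1, fun x ↦ RingHom.congr_fun φ.2 x⟩
      invFun ψ := ⟨ψ.toRingHom, RingHom.ext ψ.commutes⟩ }

theorem finite_setOf_comp_algebraMap_eq (τ : F →+* ℂ) :
    {φ : K →+* ℂ | φ.comp (algebraMap F K) = τ}.Finite :=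
  Set.finite_of_ncard_pos ((ncard_setOf_comp_algebraMap_eq (K := K) τ).symm ▸ finrank_pos)

theorem exists_ne_comp_algebraMap_eq (h : 2 ≤ finrank F K) (φ : K →+* ℂ) :
    ∃ ρ : K →+* ℂ, ρ.comp (algebraMap F K) = φ.comp (algebraMap F K) ∧ ρ ≠ φ :=
  Set.exists_ne_of_one_lt_ncard ((ncard_setOf_comp_algebraMap_eq (F := F) (K := K) _).symm ▸ h) φ

theorem finrank_le_two_of_extensionsConjugate {τ : F →+* ℂ} (h : ExtensionsConjugate K τ) :
    finrank F K ≤ 2 := by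
  set ρ := lift K τ
  have hsub : {φ : K →+* ℂ | φ.comp (algebraMap F K) = τ} ⊆ {ρ, conjugate ρ} := by
    intro φ hφ
    by_cases hρ : φ = ρ
    · exact Or.inl hρ
    · exact Or.inr (h φ ρ hφ (lift_comp_algebraMap K τ) hρ)
  rw [← ncard_setOf_comp_algebraMap_eq τ]
  exact (Set.ncard_le_ncard hsub).trans ((Set.ncard_insert_le _ _).trans (by simp))

theorem isTotallyReal_of_forall_extensionsConjugate (hK : 2 ≤ finrank F K)
    (h : ∀ τ : F →+* ℂ, ExtensionsConjugate K τ) : IsTotallyReal F := by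
  refine ⟨fun v ↦ InfinitePlace.isReal_iff.2 ?_⟩
  set ρ := lift K v.embedding
  have hρ : ρ.comp (algebraMap F K) = v.embedding := lift_comp_algebraMap K _
  obtain ⟨ρ', hρ', hne⟩ := exists_ne_comp_algebraMap_eq hK ρ
  rw [hρ] at hρ'
  exact isReal_of_conjugate_comp_eq hρ (h _ ρ' ρ hρ' hρ hne ▸ hρ')

theorem isTotallyComplex_of_forall_extensionsConjugate (hK : 2 ≤ finrank F K)
    (h : ∀ τ : F →+* ℂ, ExtensionsConjugate K τ) : IsTotallyComplex K := by
  refine ⟨fun v ↦ InfinitePlace.isComplex_iff.2 fun hv ↦ ?_⟩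
  obtain ⟨ρ, hρ, hne⟩ := exists_ne_comp_algebraMap_eq hK v.embedding
  exact hne (h _ ρ v.embedding hρ rfl hne ▸ isReal_iff.1 hv)

section NonReal

variable {σ : K →+* ℂ} (hσ : ¬IsReal σ) (hτ : IsReal (σ.comp (algebraMap F K)))
include hσ hτ

theorem two_le_finrank_of_not_isReal : 2 ≤ finrank F K := by
  rw [← ncard_setOf_comp_algebraMap_eq (σ.comp (algebraMap F K)), ← ncard_pair_conjugate hσ]
  exact Set.ncard_le_ncard (pair_conjugate_subset_setOf_comp_algebraMap_eq hτ)
    (finite_setOf_comp_algebraMap_eq _)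

theorem eq_or_eq_conjugate_of_finrank_le_two (hK : finrank F K ≤ 2) {φ : K →+* ℂ}
    (hφ : φ.comp (algebraMap F K) = σ.comp (algebraMap F K)) : φ = σ ∨ φ = conjugate σ := by
  have := Set.eq_of_subset_of_ncard_le (pair_conjugate_subset_setOf_comp_algebraMap_eq hτ)
    (by rw [ncard_setOf_comp_algebraMap_eq, ncard_pair_conjugate hσ]; exact hK)
    (finite_setOf_comp_algebraMap_eq _)
  exact this.symm.subset hφ

theorem extensionsConjugate_of_finrank_le_two (hK : finrank F K ≤ 2) :
    ExtensionsConjugate K (σ.comp (algebraMap F K)) := by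
  intro ρ₁ ρ₂ h₁ h₂ hne
  rcases eq_or_eq_conjugate_of_finrank_le_two hσ hτ hK h₁ with rfl | rfl <;>
    rcases eq_or_eq_conjugate_of_finrank_le_two hσ hτ hK h₂ with rfl | rfl <;>
    simp_all

end NonReal

end Extensions

theorem isCMField_of_extensionsConjugate {F K : Type*} [Field F] [Field K] [NumberField F]
    [NumberField K] [Algebra F K] {σ : K →+* ℂ} (hσ : ¬IsReal σ)
    (hτ : IsReal (σ.comp (algebraMap F K))) (hF : 1 < finrank ℚ F)
    (h : ∀ τ ≠ σ.comp (algebraMap F K), ExtensionsConjugate K τ) : IsCMField K := by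
  obtain ⟨τ₁, hτ₁⟩ := Fintype.exists_ne_of_one_lt_card
    ((Embeddings.card F ℂ).symm ▸ hF) (σ.comp (algebraMap F K))
  have hle := finrank_le_two_of_extensionsConjugate (h τ₁ hτ₁)
  have h2 := two_le_finrank_of_not_isReal hσ hτ
  have hall (τ : F →+* ℂ) : ExtensionsConjugate K τ := by
    by_cases hτ₀ : τ = σ.comp (algebraMap F K)
    · exact hτ₀ ▸ extensionsConjugate_of_finrank_le_two hσ hτ hle
    · exact h τ hτ₀
  have := isTotallyReal_of_forall_extensionsConjugate h2 hall
  have := isTotallyComplex_of_forall_extensionsConjugate h2 hall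
  have : Algebra.IsQuadraticExtension F K := ⟨le_antisymm hle h2⟩
  exact IsCMField.ofCMExtension F K

end NumberField.ComplexEmbedding

/-- **Two further places agreeing on the maximal real subfield** (Lemma 2.8 of the paper).
Let `K` be a non-CM number field, `σ : K → ℂ` a complex embedding, and
`F = σ⁻¹(ℝ) ≠ ℚ`. Then there are two embeddings `σ_k ≠ σ_l` of `K`, neither equal to `σ` or
its conjugate, with `σ_k` not conjugate to `σ_l`, such that `|σ_k(t)| = |σ_l(t)|` for all
`t ∈ F`. -/
theorem exists_places_agreeing_on_real_subfield (K : Type) [Field K] [NumberField K]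
    (hK : ¬ IsCM K) (σ : K →+* ℂ) (hσ : ∃ t : K, (σ t).im ≠ 0)
    (hF : Subfield.comap σ Complex.ofRealHom.fieldRange ≠ ⊥) :
    ∃ σk σl : K →+* ℂ,
      σk ≠ σl ∧ σk ≠ (starRingEnd ℂ).comp σl ∧
      σk ≠ σ ∧ σk ≠ (starRingEnd ℂ).comp σ ∧
      σl ≠ σ ∧ σl ≠ (starRingEnd ℂ).comp σ ∧
      ∀ t ∈ Subfield.comap σ Complex.ofRealHom.fieldRange,
        ‖σk t‖ = ‖σl t‖ := by
  set F := Subfield.comap σ Complex.ofRealHom.fieldRange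
  have hσ_real : ¬IsReal σ := fun h ↦ hσ.elim fun t ht ↦
    ht (Complex.conj_eq_iff_im.1 (RingHom.congr_fun (isReal_iff.1 h) t))
  have hτ_real : IsReal (σ.comp (algebraMap F K)) :=
    isReal_iff.2 <| RingHom.ext fun ⟨x, r, hr⟩ ↦
      show starRingEnd ℂ (σ x) = σ x from hr ▸ Complex.conj_ofReal r
  obtain ⟨τ, hτ, hτ_conj⟩ : ∃ τ ≠ σ.comp (algebraMap F K), ¬ExtensionsConjugate K τ := by
    by_contra! h
    exact hK (isCMField_of_extensionsConjugate hσ_real hτ_real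
      (Subfield.one_lt_finrank_rat_of_ne_bot hF) h).isCM
  simp only [ExtensionsConjugate, not_forall] at hτ_conj
  obtain ⟨ρ₁, ρ₂, h₁, h₂, hne, hne_conj⟩ := hτ_conj
  have hne_σ {ρ : K →+* ℂ} (hρ : ρ.comp (algebraMap F K) = τ) : ρ ≠ σ ∧ ρ ≠ conjugate σ :=
    ⟨by rintro rfl; exact hτ hρ.symm,
      by rintro rfl; exact hτ (hρ.symm.trans (conjugate_comp_eq_of_isReal hτ_real))⟩
  refine ⟨ρ₁, ρ₂, hne, hne_conj, (hne_σ h₁).1, (hne_σ h₁).2, (hne_σ h₂).1, (hne_σ h₂).2,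
    fun t ht ↦ ?_⟩
  rw [show ρ₁ t = ρ₂ t from RingHom.congr_fun (h₁.trans h₂.symm) ⟨t, ht⟩]
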